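/- Assume the inf-sup condition (H1). If G ∈ H¹(0,T;X') satisfies ∫₀ᵀ ⟨G(t), v(t)⟩_X dt = 0 for all v ∈ L²(0,T;V), then there exists a unique λ ∈ L²(0,T;M) such that ∫₀ᵀ b(v(t), λ(t)) dt = ∫₀ᵀ ⟨G(t), v(t)⟩_X dt for all v ∈ L²(0,T;X); moreover λ ∈ H¹(0,T;M) and there exists a constant C > 0, independent of G, such that ‖λ‖_{L²(0,T;M)} ≤ C ‖G‖_{L²(0,T;X')}. -/

import Mathlib

open MeasureTheory Set Filter
open scoped ENNReal NNReal

noncomputable section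

/-- A `C^∞` test function with compact support contained in `(0,T)`. -/
def IsTest (T : ℝ) (φ : ℝ → ℝ) : Prop :=
  ContDiff ℝ (⊤ : ℕ∞) φ ∧ HasCompactSupport φ ∧ tsupport φ ⊆ Set.Ioo 0 T

/-- Pointwise inner product of two `L²` functions is integrable. -/
lemma memLp_two_integrable_inner {α X : Type*} [MeasurableSpace α] {μ : Measure α}
    [NormedAddCommGroup X] [InnerProductSpace ℝ X] {f g : α → X}
    (hf : MemLp f 2 μ) (hg : MemLp g 2 μ) :
    Integrable (fun t => (inner ℝ (f t) (g t) : ℝ)) μ := by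
  have h := MeasureTheory.L2.integrable_inner (𝕜 := ℝ) (hf.toLp f) (hg.toLp g)
  refine h.congr ?_
  filter_upwards [hf.coeFn_toLp, hg.coeFn_toLp] with t h1 h2
  rw [h1, h2]

/-- Construction of the solution operator from the inf-sup condition. -/
lemma exists_solution_operator
    {X M : Type*}
    [NormedAddCommGroup X] [InnerProductSpace ℝ X] [CompleteSpace X]
    [NormedAddCommGroup M] [NormedSpace ℝ M] [CompleteSpace M]
    (b : X →L[ℝ] M →L[ℝ] ℝ)
    (V : Set X) (hVdef : V = {v : X | ∀ μ : M, b v μ = 0})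
    (β : ℝ) (hβ : 0 < β)
    (hsup : ∀ μ : M, β * ‖μ‖ ≤ ⨆ v : X, b v μ / ‖v‖) :
    ∃ (Jsym : (X →L[ℝ] ℝ) →L[ℝ] X) (A : M →L[ℝ] X)
      (Θ : (X →L[ℝ] ℝ) →L[ℝ] M) (P : X →L[ℝ] X),
      (∀ (f : X →L[ℝ] ℝ) (v : X), (inner ℝ (Jsym f) v : ℝ) = f v) ∧
      (∀ f : X →L[ℝ] ℝ, ‖Jsym f‖ = ‖f‖) ∧
      (∀ (μ : M) (v : X), (inner ℝ (A μ) v : ℝ) = b v μ) ∧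
      (∀ μ : M, ‖μ‖ ≤ β⁻¹ * ‖A μ‖) ∧
      (∀ x : X, P x ∈ V) ∧
      (∀ x : X, (inner ℝ x (P x) : ℝ) = ‖P x‖ ^ 2) ∧
      (∀ f : X →L[ℝ] ℝ, P (Jsym f) = 0 → A (Θ f) = Jsym f) := by
  have hβinv : (0:ℝ) < β⁻¹ := inv_pos.mpr hβ
  set J := InnerProductSpace.toDual ℝ X with hJ
  set Jsym : (X →L[ℝ] ℝ) →L[ℝ] X := J.symm.toContinuousLinearEquiv.toContinuousLinearMap
    with hJsym
  have hJ1 : ∀ (f : X →L[ℝ] ℝ) (v : X), (inner ℝ (Jsym f) v : ℝ) = f v := by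
    intro f v
    exact InnerProductSpace.toDual_symm_apply
  have hJ2 : ∀ f : X →L[ℝ] ℝ, ‖Jsym f‖ = ‖f‖ := by
    intro f
    exact LinearIsometryEquiv.norm_map _ _
  set A : M →L[ℝ] X := Jsym.comp b.flip with hA
  have hA_inner : ∀ (μ : M) (v : X), (inner ℝ (A μ) v : ℝ) = b v μ := by
    intro μ v
    rw [show A μ = Jsym (b.flip μ) from rfl, hJ1, ContinuousLinearMap.flip_apply]
  have hA_norm : ∀ μ : M, β * ‖μ‖ ≤ ‖A μ‖ := by
    intro μ
    rw [show A μ = Jsym (b.flip μ) from rfl, hJ2]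
    refine (hsup μ).trans (Real.iSup_le (fun v => ?_) (norm_nonneg _))
    rcases eq_or_ne v 0 with rfl | hv
    · simp
    · rw [div_le_iff₀ (norm_pos_iff.mpr hv)]
      calc b v μ ≤ ‖b.flip μ v‖ := by
            rw [ContinuousLinearMap.flip_apply]; exact le_abs_self _
        _ ≤ ‖b.flip μ‖ * ‖v‖ := (b.flip μ).le_opNorm v
  have hA_bound : ∀ μ : M, ‖μ‖ ≤ β⁻¹ * ‖A μ‖ := by
    intro μ
    calc ‖μ‖ = β⁻¹ * (β * ‖μ‖) := by field_simp
      _ ≤ β⁻¹ * ‖A μ‖ := mul_le_mul_of_nonneg_left (hA_norm μ) (le_of_lt hβinv)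
  have hAanti : AntilipschitzWith ⟨β⁻¹, le_of_lt hβinv⟩ A :=
    A.antilipschitz_of_bound (fun μ => hA_bound μ)
  have hAinj : Function.Injective A := hAanti.injective
  set R : Submodule ℝ X := LinearMap.range (A : M →ₗ[ℝ] X) with hR
  have hRclosed : IsClosed (R : Set X) := by
    have h := hAanti.isClosed_range A.uniformContinuous
    have h2 : (R : Set X) = Set.range A := by
      rw [hR]; exact LinearMap.coe_range _
    rw [h2]; exact h
  haveI : CompleteSpace R := hRclosed.completeSpace_coe
  haveI : Submodule.HasOrthogonalProjection R := Submodule.HasOrthogonalProjection.ofCompleteSpace R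
  have hVR : V = (Rᗮ : Set X) := by
    ext v
    rw [hVdef]
    simp only [Set.mem_setOf_eq, SetLike.mem_coe, Submodule.mem_orthogonal]
    constructor
    · rintro h u ⟨μ, rfl⟩
      rw [ContinuousLinearMap.coe_coe, hA_inner]; exact h μ
    · intro h μ
      rw [← hA_inner]
      exact h (A μ) ⟨μ, rfl⟩
  haveI : CompleteSpace (Rᗮ : Submodule ℝ X) :=
    (Submodule.isClosed_orthogonal R).completeSpace_coe
  haveI : Submodule.HasOrthogonalProjection Rᗮ := Submodule.HasOrthogonalProjection.ofCompleteSpace _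
  -- the projection onto the orthogonal complement of R
  set P : X →L[ℝ] X := (Rᗮ).subtypeL.comp (Submodule.orthogonalProjectionOnto Rᗮ) with hP
  have hP_apply : ∀ x : X, P x = ((Submodule.orthogonalProjectionOnto Rᗮ x : X)) := fun x => rfl
  have hP_mem : ∀ x : X, P x ∈ V := by
    intro x
    rw [hVR, hP_apply]
    exact SetLike.coe_mem _
  have hP_inner : ∀ x : X, (inner ℝ x (P x) : ℝ) = ‖P x‖ ^ 2 := by
    intro x
    have h2 : (inner ℝ (x - P x) (P x) : ℝ) = 0 := by
      rw [hP_apply]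
      exact Submodule.starProjection_inner_eq_zero (K := Rᗮ) x _ (SetLike.coe_mem _)
    rw [inner_sub_left, sub_eq_zero] at h2
    rw [h2, real_inner_self_eq_norm_sq]
  -- the inverse of A on its range
  set e : M ≃ₗ[ℝ] R := LinearEquiv.ofInjective (A : M →ₗ[ℝ] X) hAinj with he
  have hAe : ∀ z : R, A (e.symm z) = (z : X) := by
    intro z
    conv_rhs => rw [← e.apply_symm_apply z]
    rw [he, LinearEquiv.ofInjective_apply, ContinuousLinearMap.coe_coe]
  have hΦbound : ∀ z : R, ‖(e.symm : R →ₗ[ℝ] M) z‖ ≤ β⁻¹ * ‖z‖ := by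
    intro z
    have h1 : ‖(e.symm z : M)‖ ≤ β⁻¹ * ‖A (e.symm z)‖ := hA_bound _
    rw [hAe z] at h1
    simpa using h1
  set Φ : R →L[ℝ] M := LinearMap.mkContinuous (e.symm : R →ₗ[ℝ] M) β⁻¹ hΦbound with hΦ
  set Ψ : X →L[ℝ] M := Φ.comp (Submodule.orthogonalProjectionOnto R) with hΨdef
  have hΨ : ∀ x : X, x ∈ R → A (Ψ x) = x := by
    intro x hx
    have hproj : Submodule.orthogonalProjectionOnto R x = ⟨x, hx⟩ :=
      Subtype.coe_injective (Submodule.starProjection_eq_self_iff.mpr hx)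
    rw [hΨdef]
    simp only [ContinuousLinearMap.coe_comp', Function.comp_apply, hproj]
    rw [hΦ, LinearMap.mkContinuous_apply]
    exact hAe ⟨x, hx⟩
  refine ⟨Jsym, A, Ψ.comp Jsym, P, hJ1, hJ2, hA_inner, hA_bound, hP_mem, hP_inner, ?_⟩
  intro f hf
  have hfR : Jsym f ∈ R := by
    have h0 : Submodule.orthogonalProjectionOnto Rᗮ (Jsym f) = 0 := by
      apply Subtype.ext
      show ((Submodule.orthogonalProjectionOnto Rᗮ (Jsym f) : X)) = ((0 : Rᗮ) : X)
      rw [ZeroMemClass.coe_zero]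
      exact hf
    have h1 : Jsym f ∈ Rᗮᗮ := Submodule.orthogonalProjectionOnto_eq_zero_iff.mp h0
    rwa [Submodule.orthogonal_orthogonal] at h1
  exact hΨ _ hfR


/-- If the integral of `‖h‖²` vanishes for an `L²` function, then `h = 0` a.e. -/
lemma ae_zero_of_integral_normsq {α X : Type*} [MeasurableSpace α] {ν : Measure α}
    [NormedAddCommGroup X] [InnerProductSpace ℝ X] {h : α → X}
    (hh : MemLp h 2 ν) (hint : ∫ t, ‖h t‖ ^ 2 ∂ν = 0) :
    ∀ᵐ t ∂ν, h t = 0 := by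
  have hsq : Integrable (fun t => ‖h t‖ ^ 2) ν := by
    have := memLp_two_integrable_inner hh hh
    refine this.congr (Eventually.of_forall fun t => ?_)
    exact real_inner_self_eq_norm_sq _
  have hzero : (fun t => ‖h t‖ ^ 2) =ᵐ[ν] 0 :=
    (integral_eq_zero_iff_of_nonneg (fun t => by positivity) hsq).mp hint
  filter_upwards [hzero] with t ht
  simp only [Pi.zero_apply] at ht
  have hn : ‖h t‖ = 0 := by nlinarith [norm_nonneg (h t)]
  exact norm_eq_zero.mp hn

/-- Uniqueness of the multiplier. -/
lemma multiplier_unique_ae {α X M : Type*} [MeasurableSpace α] {ν : Measure α}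
    [NormedAddCommGroup X] [InnerProductSpace ℝ X]
    [NormedAddCommGroup M] [NormedSpace ℝ M]
    (b : X →L[ℝ] M →L[ℝ] ℝ) (A : M →L[ℝ] X)
    (hA_inner : ∀ (μ : M) (v : X), (inner ℝ (A μ) v : ℝ) = b v μ)
    (hAinj : Function.Injective A)
    {lam lam₂ : α → M}
    (hlam : MemLp lam 2 ν) (hlam₂ : MemLp lam₂ 2 ν)
    (heq : ∀ v : α → X, MemLp v 2 ν →
      ∫ t, b (v t) (lam₂ t) ∂ν = ∫ t, b (v t) (lam t) ∂ν) :
    ∀ᵐ t ∂ν, lam₂ t = lam t := by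
  have hbint : ∀ (v : α → X) (m : α → M), MemLp v 2 ν → MemLp m 2 ν →
      Integrable (fun t => b (v t) (m t)) ν := by
    intro v m hv hm
    have hAm : MemLp (fun t => A (m t)) 2 ν := A.comp_memLp' hm
    have := memLp_two_integrable_inner hAm hv
    refine this.congr (Eventually.of_forall fun t => ?_)
    exact hA_inner (m t) (v t)
  set w : α → X := fun t => A (lam₂ t) - A (lam t) with hw_def
  have hw : MemLp w 2 ν := (A.comp_memLp' hlam₂).sub (A.comp_memLp' hlam)
  have h1 : Integrable (fun t => b (w t) (lam₂ t)) ν := hbint w lam₂ hw hlam₂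
  have h2 : Integrable (fun t => b (w t) (lam t)) ν := hbint w lam hw hlam
  have hdiff : ∫ t, (b (w t) (lam₂ t) - b (w t) (lam t)) ∂ν = 0 := by
    rw [integral_sub h1 h2, heq w hw, sub_self]
  have hptw : ∀ t, b (w t) (lam₂ t) - b (w t) (lam t) = ‖w t‖ ^ 2 := by
    intro t
    rw [← hA_inner, ← hA_inner, ← inner_sub_left]
    exact real_inner_self_eq_norm_sq (w t)
  rw [integral_congr_ae (Eventually.of_forall fun t => hptw t)] at hdiff
  have := ae_zero_of_integral_normsq hw hdiff
  filter_upwards [this] with t ht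
  rw [hw_def] at ht
  simp only [sub_eq_zero] at ht
  exact hAinj ht

/-- The weak derivative passes through a continuous linear map. -/
lemma weak_deriv_comp {E F : Type*} [NormedAddCommGroup E] [NormedSpace ℝ E]
    [NormedAddCommGroup F] [NormedSpace ℝ F] [CompleteSpace E] [CompleteSpace F]
    (T : ℝ) (Θ : E →L[ℝ] F) (G G' : ℝ → E)
    (hG : Integrable G (volume.restrict (Set.Ioc 0 T)))
    (hG' : Integrable G' (volume.restrict (Set.Ioc 0 T)))
    (hweak : ∀ φ : ℝ → ℝ, IsTest T φ →
      ∫ t in Set.Ioc 0 T, deriv φ t • G t = - ∫ t in Set.Ioc 0 T, φ t • G' t)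
    (φ : ℝ → ℝ) (hφ : IsTest T φ) :
    ∫ t in Set.Ioc 0 T, deriv φ t • Θ (G t)
      = - ∫ t in Set.Ioc 0 T, φ t • Θ (G' t) := by
  obtain ⟨hφsm, hφsupp, hφss⟩ := hφ
  have hderiv_cont : Continuous (deriv φ) := hφsm.continuous_deriv (by simp)
  have hφcont : Continuous φ := hφsm.continuous
  obtain ⟨C₁, hC₁⟩ := (hφsupp.deriv).exists_bound_of_continuous hderiv_cont
  obtain ⟨C₂, hC₂⟩ := hφsupp.exists_bound_of_continuous hφcont
  have hd_mem : MemLp (deriv φ) ⊤ (volume.restrict (Set.Ioc 0 T)) :=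
    memLp_top_of_bound hderiv_cont.aestronglyMeasurable C₁
      (Eventually.of_forall fun t => by simpa using hC₁ t)
  have hφ_mem : MemLp φ ⊤ (volume.restrict (Set.Ioc 0 T)) :=
    memLp_top_of_bound hφcont.aestronglyMeasurable C₂
      (Eventually.of_forall fun t => by simpa using hC₂ t)
  have hint1 : Integrable (fun t => deriv φ t • G t) (volume.restrict (Set.Ioc 0 T)) :=
    hG.smul_of_top_right hd_mem
  have hint2 : Integrable (fun t => φ t • G' t) (volume.restrict (Set.Ioc 0 T)) :=
    hG'.smul_of_top_right hφ_mem
  have key := hweak φ ⟨hφsm, hφsupp, hφss⟩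
  calc ∫ t in Set.Ioc 0 T, deriv φ t • Θ (G t)
      = ∫ t in Set.Ioc 0 T, Θ (deriv φ t • G t) := by
        refine integral_congr_ae (Eventually.of_forall fun t => ?_)
        exact (Θ.map_smul _ _).symm
    _ = Θ (∫ t in Set.Ioc 0 T, deriv φ t • G t) := Θ.integral_comp_comm hint1
    _ = Θ (- ∫ t in Set.Ioc 0 T, φ t • G' t) := by rw [key]
    _ = - Θ (∫ t in Set.Ioc 0 T, φ t • G' t) := map_neg _ _
    _ = - ∫ t in Set.Ioc 0 T, Θ (φ t • G' t) := by rw [Θ.integral_comp_comm hint2]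
    _ = - ∫ t in Set.Ioc 0 T, φ t • Θ (G' t) := by
        congr 1
        refine integral_congr_ae (Eventually.of_forall fun t => ?_)
        exact Θ.map_smul _ _

set_option maxHeartbeats 1000000 in
/-- Assume the inf-sup condition (H1). If `G ∈ H¹(0,T;X')` (weak derivative
`G'`) satisfies `∫₀ᵀ ⟨G t, v t⟩ dt = 0` for all `v ∈ L²(0,T;V)`, then there is a unique
`λ ∈ L²(0,T;M)` with `∫₀ᵀ b(v t, λ t) dt = ∫₀ᵀ ⟨G t, v t⟩ dt` for all `v ∈ L²(0,T;X)`;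
moreover `λ ∈ H¹(0,T;M)` and `‖λ‖_{L²(0,T;M)} ≤ C ‖G‖_{L²(0,T;X')}` with `C`
independent of `G`. -/
theorem lagrange_multiplier_exists
    {X M : Type*}
    [NormedAddCommGroup X] [InnerProductSpace ℝ X] [CompleteSpace X]
    [NormedAddCommGroup M] [NormedSpace ℝ M] [CompleteSpace M]
    -- M is reflexive
    (hrefl : Function.Surjective (NormedSpace.inclusionInDoubleDual ℝ M))
    (T : ℝ) (hT : 0 < T)
    (b : X →L[ℝ] M →L[ℝ] ℝ)
    -- the kernel V of b
    (V : Set X) (hVdef : V = {v : X | ∀ μ : M, b v μ = 0})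
    -- (H1) inf-sup condition for b
    (hH1 : ∃ β > 0, ∀ μ : M, β * ‖μ‖ ≤ ⨆ v : X, b v μ / ‖v‖) :
    ∃ C > 0, ∀ G G' : ℝ → X →L[ℝ] ℝ,
      -- G ∈ H¹(0,T;X') with weak derivative G'
      MemLp G 2 (volume.restrict (Set.Ioc 0 T)) →
      MemLp G' 2 (volume.restrict (Set.Ioc 0 T)) →
      (∀ φ : ℝ → ℝ, IsTest T φ →
        ∫ t in Set.Ioc 0 T, deriv φ t • G t = - ∫ t in Set.Ioc 0 T, φ t • G' t) →
      -- G annihilates L²(0,T;V)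
      (∀ v : ℝ → X, MemLp v 2 (volume.restrict (Set.Ioc 0 T)) → (∀ t, v t ∈ V) →
        ∫ t in Set.Ioc 0 T, G t (v t) = 0) →
      ∃ lam lam' : ℝ → M,
        MemLp lam 2 (volume.restrict (Set.Ioc 0 T)) ∧
        -- the defining identity, for all v ∈ L²(0,T;X)
        (∀ v : ℝ → X, MemLp v 2 (volume.restrict (Set.Ioc 0 T)) →
          ∫ t in Set.Ioc 0 T, b (v t) (lam t) = ∫ t in Set.Ioc 0 T, G t (v t)) ∧
        -- uniqueness in L²(0,T;M)
        (∀ lam₂ : ℝ → M, MemLp lam₂ 2 (volume.restrict (Set.Ioc 0 T)) →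
          (∀ v : ℝ → X, MemLp v 2 (volume.restrict (Set.Ioc 0 T)) →
            ∫ t in Set.Ioc 0 T, b (v t) (lam₂ t) = ∫ t in Set.Ioc 0 T, G t (v t)) →
          ∀ᵐ t ∂(volume.restrict (Set.Ioc 0 T)), lam₂ t = lam t) ∧
        -- λ ∈ H¹(0,T;M) with weak derivative λ'
        MemLp lam' 2 (volume.restrict (Set.Ioc 0 T)) ∧
        (∀ φ : ℝ → ℝ, IsTest T φ →
          ∫ t in Set.Ioc 0 T, deriv φ t • lam t
            = - ∫ t in Set.Ioc 0 T, φ t • lam' t) ∧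
        -- the bound, with C independent of G
        (eLpNorm lam 2 (volume.restrict (Set.Ioc 0 T))).toReal
          ≤ C * (eLpNorm G 2 (volume.restrict (Set.Ioc 0 T))).toReal := by
  classical
  obtain ⟨β, hβ, hsup⟩ := hH1
  have hβinv : (0:ℝ) < β⁻¹ := inv_pos.mpr hβ
  obtain ⟨Jsym, A, Θ, P, hJ1, hJ2, hA_inner, hA_bound, hP_mem, hP_inner, hkey⟩ :=
    exists_solution_operator b V hVdef β hβ hsup
  have hAinj : Function.Injective A := by
    intro μ₁ μ₂ h
    have h1 : ‖μ₁ - μ₂‖ ≤ β⁻¹ * ‖A (μ₁ - μ₂)‖ := hA_bound _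
    rw [map_sub, h, sub_self, norm_zero, mul_zero] at h1
    have h2 : ‖μ₁ - μ₂‖ = 0 := le_antisymm h1 (norm_nonneg _)
    exact sub_eq_zero.mp (norm_eq_zero.mp h2)
  haveI : IsFiniteMeasure (volume.restrict (Set.Ioc (0:ℝ) T)) := by
    constructor
    rw [Measure.restrict_apply_univ, Real.volume_Ioc]
    exact ENNReal.ofReal_lt_top
  refine ⟨β⁻¹, hβinv, ?_⟩
  intro G G' hG hG' hweak hann
  have hg : MemLp (fun t => Jsym (G t)) 2 (volume.restrict (Set.Ioc 0 T)) :=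
    Jsym.comp_memLp' hG
  -- a.e. t, `P (Jsym (G t)) = 0`
  have hmemR : ∀ᵐ t ∂(volume.restrict (Set.Ioc 0 T)), P (Jsym (G t)) = 0 := by
    have hh : MemLp (fun t => P (Jsym (G t))) 2 (volume.restrict (Set.Ioc 0 T)) :=
      P.comp_memLp' hg
    have hint : ∫ t in Set.Ioc 0 T, G t (P (Jsym (G t))) = 0 :=
      hann _ hh (fun t => hP_mem _)
    have hfun : (fun t => G t (P (Jsym (G t)))) = fun t => ‖P (Jsym (G t))‖ ^ 2 := by
      funext t
      rw [← hJ1 (G t) (P (Jsym (G t)))]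
      exact hP_inner (Jsym (G t))
    have hint2 : ∫ t in Set.Ioc 0 T, ‖P (Jsym (G t))‖ ^ 2 = 0 := by
      rw [← hfun]
      exact hint
    exact ae_zero_of_integral_normsq hh hint2
  have hAlam : ∀ᵐ t ∂(volume.restrict (Set.Ioc 0 T)), A (Θ (G t)) = Jsym (G t) := by
    filter_upwards [hmemR] with t ht
    exact hkey (G t) ht
  have hblam : ∀ᵐ t ∂(volume.restrict (Set.Ioc 0 T)), ∀ v : X, b v (Θ (G t)) = G t v := by
    filter_upwards [hAlam] with t ht v
    rw [← hA_inner, ht]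
    exact hJ1 (G t) v
  have hlam_mem : MemLp (fun t => Θ (G t)) 2 (volume.restrict (Set.Ioc 0 T)) :=
    Θ.comp_memLp' hG
  have hlam'_mem : MemLp (fun t => Θ (G' t)) 2 (volume.restrict (Set.Ioc 0 T)) :=
    Θ.comp_memLp' hG'
  -- the defining identity
  have hident : ∀ v : ℝ → X, MemLp v 2 (volume.restrict (Set.Ioc 0 T)) →
      ∫ t in Set.Ioc 0 T, b (v t) (Θ (G t)) = ∫ t in Set.Ioc 0 T, G t (v t) := by
    intro v hv
    refine integral_congr_ae ?_
    filter_upwards [hblam] with t ht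
    exact ht (v t)
  refine ⟨fun t => Θ (G t), fun t => Θ (G' t), hlam_mem, hident, ?_, hlam'_mem, ?_, ?_⟩
  · -- uniqueness
    intro lam₂ hlam₂ hid₂
    refine multiplier_unique_ae b A hA_inner hAinj hlam_mem hlam₂ ?_
    intro v hv
    rw [hid₂ v hv, hident v hv]
  · -- weak derivative
    intro φ hφ
    exact weak_deriv_comp T Θ G G' (hG.integrable one_le_two) (hG'.integrable one_le_two)
      hweak φ hφ
  · -- the bound
    have h3 : eLpNorm (fun t => Θ (G t)) 2 (volume.restrict (Set.Ioc 0 T))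
        ≤ eLpNorm (fun t => β⁻¹ * ‖G t‖) 2 (volume.restrict (Set.Ioc 0 T)) := by
      refine eLpNorm_mono_ae ?_
      filter_upwards [hAlam] with t ht
      have h1 : ‖Θ (G t)‖ ≤ β⁻¹ * ‖A (Θ (G t))‖ := hA_bound _
      rw [ht, hJ2 (G t)] at h1
      rw [Real.norm_of_nonneg (by positivity)]
      exact h1
    have h5 : eLpNorm (fun t => β⁻¹ * ‖G t‖) 2 (volume.restrict (Set.Ioc 0 T))
        = (‖(β⁻¹:ℝ)‖₊ : ℝ≥0∞) * eLpNorm G 2 (volume.restrict (Set.Ioc 0 T)) := by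
      have h6 := eLpNorm_const_smul (β⁻¹:ℝ) (fun t => ‖G t‖) 2
        (volume.restrict (Set.Ioc 0 T))
      have h7 : eLpNorm (fun t => ‖G t‖) 2 (volume.restrict (Set.Ioc 0 T))
          = eLpNorm G 2 (volume.restrict (Set.Ioc 0 T)) := eLpNorm_norm G
      calc eLpNorm (fun t => β⁻¹ * ‖G t‖) 2 (volume.restrict (Set.Ioc 0 T))
          = eLpNorm ((β⁻¹:ℝ) • fun t => ‖G t‖) 2 (volume.restrict (Set.Ioc 0 T)) := rfl
        _ = (‖(β⁻¹:ℝ)‖₊ : ℝ≥0∞) * eLpNorm (fun t => ‖G t‖) 2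
              (volume.restrict (Set.Ioc 0 T)) := h6
        _ = (‖(β⁻¹:ℝ)‖₊ : ℝ≥0∞) * eLpNorm G 2 (volume.restrict (Set.Ioc 0 T)) := by
              rw [h7]
    rw [h5] at h3
    have hfin : (‖(β⁻¹:ℝ)‖₊ : ℝ≥0∞) * eLpNorm G 2 (volume.restrict (Set.Ioc 0 T)) ≠ ⊤ :=
      ENNReal.mul_ne_top ENNReal.coe_ne_top hG.2.ne
    have h4 := ENNReal.toReal_mono hfin h3
    rw [ENNReal.toReal_mul, ENNReal.coe_toReal, coe_nnnorm, Real.norm_eq_abs,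
      abs_of_pos hβinv] at h4
    exact h4
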